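/- For all n ≥ 1, ∑_{k=0}^{n} (-1)^{n+k} W(n,k) = n!, where W(n,k) are the Ward numbers defined by W(n,k) = k·W(n-1,k) + (n+k-1)·W(n-1,k-1) with W(0,k) = δ_{0,k}. -/

import Mathlib

/-!
Shifting the index in the second term of the recurrence shows that the signed row sums
`S n = ∑ₖ (-1)^(n+k) W(n,k)` satisfy `S (n+1) = ∑ₖ (-1)^(n+k) ((n+k+1) - k) W(n,k) = (n+1) S n`;
since `S 0 = 1`, `S n = n!`.
-/

def wardW : ℕ → ℕ → ℕ
  | 0, 0 => 1
  | 0, _ + 1 => 0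
  | _ + 1, 0 => 0
  | n + 1, k + 1 => (k + 1) * wardW n (k + 1) + (n + k + 1) * wardW n k

open Finset

theorem Finset.sum_range_succ_comp_eq_of_eq_zero {M : Type*} [AddCommMonoid M] (f : ℕ → M)
    (n : ℕ) (h₀ : f 0 = 0) (hn : f (n + 1) = 0) :
    ∑ k ∈ range (n + 1), f (k + 1) = ∑ k ∈ range (n + 1), f k := by
  have h := sum_range_succ' f (n + 1)
  rw [sum_range_succ, hn, h₀, add_zero, add_zero] at h
  exact h.symm

theorem wardW_eq_zero_of_lt : ∀ {n k : ℕ}, n < k → wardW n k = 0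
  | 0, _ + 1, _ => rfl
  | n + 1, k + 1, h => by
    have hnk : n < k := Nat.lt_of_succ_lt_succ h
    rw [wardW, wardW_eq_zero_of_lt hnk, wardW_eq_zero_of_lt (hnk.trans k.lt_succ_self), mul_zero,
      mul_zero, add_zero]

theorem wardW_succ_zero (n : ℕ) : wardW (n + 1) 0 = 0 := rfl

theorem wardW_succ_succ (n k : ℕ) :
    wardW (n + 1) (k + 1) = (k + 1) * wardW n (k + 1) + (n + k + 1) * wardW n k := rfl

def wardAltSum (n : ℕ) : ℤ := ∑ k ∈ range (n + 1), (-1) ^ (n + k) * wardW n k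

theorem wardAltSum_zero : wardAltSum 0 = 1 := by
  simp [wardAltSum, wardW]

theorem wardAltSum_succ (n : ℕ) : wardAltSum (n + 1) = (n + 1) * wardAltSum n := by
  have hshift : ∑ k ∈ range (n + 1), (-1 : ℤ) ^ (n + (k + 1)) * ((k + 1 : ℕ) * wardW n (k + 1))
      = ∑ k ∈ range (n + 1), (-1 : ℤ) ^ (n + k) * (k * wardW n k) :=
    sum_range_succ_comp_eq_of_eq_zero (fun k => (-1 : ℤ) ^ (n + k) * (k * wardW n k)) n
      (by simp) (by simp [wardW_eq_zero_of_lt n.lt_succ_self])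
  calc wardAltSum (n + 1)
      = ∑ k ∈ range (n + 1), (-1 : ℤ) ^ (n + k) * wardW (n + 1) (k + 1) := by
        rw [wardAltSum, sum_range_succ', wardW_succ_zero, Nat.cast_zero, mul_zero, add_zero]
        refine sum_congr rfl fun k _ => ?_
        rw [show n + 1 + (k + 1) = n + k + 2 by ring, pow_add, neg_one_sq, mul_one]
    _ = ∑ k ∈ range (n + 1), (-1 : ℤ) ^ (n + k) * ((n + k + 1 : ℕ) * wardW n k)
          - ∑ k ∈ range (n + 1), (-1 : ℤ) ^ (n + (k + 1)) * ((k + 1 : ℕ) * wardW n (k + 1)) := by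
        rw [← sum_sub_distrib]
        refine sum_congr rfl fun k _ => ?_
        rw [wardW_succ_succ, ← add_assoc, pow_succ]
        push_cast
        ring
    _ = ∑ k ∈ range (n + 1), (-1 : ℤ) ^ (n + k) * (((n + k + 1 : ℕ) - k) * wardW n k) := by
        rw [hshift, ← sum_sub_distrib]
        exact sum_congr rfl fun k _ => by ring
    _ = (n + 1) * wardAltSum n := by
        rw [wardAltSum, mul_sum]
        exact sum_congr rfl fun k _ => by push_cast; ring

theorem wardAltSum_eq_factorial : ∀ n : ℕ, wardAltSum n = n.factorial
  | 0 => wardAltSum_zero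
  | n + 1 => by
    rw [wardAltSum_succ, wardAltSum_eq_factorial n, Nat.factorial_succ]
    push_cast
    rfl

theorem ward_alternating_sum_general (n : ℕ) :
    ∑ k ∈ Finset.range (n + 1), (-1 : ℤ) ^ (n + k) * wardW n k = (n.factorial : ℤ) :=
  wardAltSum_eq_factorial n

theorem ward_alternating_sum (n : ℕ) (hn : 1 ≤ n) :
    ∑ k ∈ Finset.range (n + 1), (-1 : ℤ) ^ (n + k) * wardW n k = (n.factorial : ℤ) :=
  ward_alternating_sum_general n
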